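/- arXiv:2605.07431 — 3 statements merged into one kernel-verified Lean document; each statement's English description precedes it below -/
import Mathlib

section
/- Let α, β, γ ∈ ℝ with γ > β > 0, and let z ∈ ℝ with |z| < 1. Then ₂F₁(α,β;γ;z) = (Γ(γ)/(Γ(β)Γ(γ−β))) · ∫₀¹ t^{β−1} (1−t)^{γ−β−1} (1−zt)^{−α} dt, where the integral is a convergent improper Riemann (Lebesgue) integral and the powers are the standard real powers of the positive real numbers t, 1−t, 1−zt for t ∈ (0,1). -/
/-- The Pochhammer symbol (rising factorial) `(a)_n = a (a+1) ⋯ (a+n-1)`. -/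
noncomputable def pochR (a : ℝ) (n : ℕ) : ℝ := ∏ i ∈ Finset.range n, (a + i)

/-- The Gauss hypergeometric function `₂F₁(a,b;c;z)` (real parameters and argument),
defined by its series for `|z| < 1`. -/
noncomputable def hyp2F1R (a b c z : ℝ) : ℝ :=
  ∑' n : ℕ, pochR a n * pochR b n / (pochR c n * n.factorial) * z ^ n

/-!
Expand `(1 - z t)^{-α} = ∑ (α)_n / n! (z t)^n` by the binomial series. Since `|z| < 1` the
series is dominated, uniformly in `t ∈ (0, 1)`, by the convergent `∑ |(α)_n / n!| |z|^n`, so it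
may be integrated term by term against the Beta weight `t^{β-1} (1-t)^{γ-β-1}`. The `n`-th moment
of this weight is `B(β + n, γ - β) = B(β, γ - β) (β)_n / (γ)_n`, which turns the integrated series
into `B(β, γ - β) ₂F₁(α, β; γ; z)`.
-/

open MeasureTheory Set
open scoped Nat

lemma pochR_succ (a : ℝ) (n : ℕ) : pochR a (n + 1) = pochR a n * (a + n) :=
  Finset.prod_range_succ _ _

lemma pochR_pos {a : ℝ} (ha : 0 < a) (n : ℕ) : 0 < pochR a n :=
  Finset.prod_pos fun _ _ => by positivity

lemma pochR_eq_ascPochhammer_eval (a : ℝ) (n : ℕ) : pochR a n = (ascPochhammer ℝ n).eval a := by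
  induction n with
  | zero => simp [pochR]
  | succ n ih => rw [pochR_succ, ascPochhammer_succ_eval, ih]

lemma pochR_div_factorial_eq_choose (a : ℝ) (n : ℕ) :
    pochR a n / n ! = Ring.choose (a + n - 1) n := by
  rw [Ring.choose_eq_smul, Polynomial.descPochhammer_smeval_eq_ascPochhammer,
    Polynomial.ascPochhammer_smeval_eq_eval, pochR_eq_ascPochhammer_eval, smul_eq_mul,
    div_eq_inv_mul]
  ring_nf

lemma Real.Gamma_add_nat_eq_mul_pochR {a : ℝ} (ha : 0 < a) (n : ℕ) :
    Real.Gamma (a + n) = Real.Gamma a * pochR a n := by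
  induction n with
  | zero => simp [pochR]
  | succ n ih =>
    rw [Nat.cast_succ, ← add_assoc, Real.Gamma_add_one (by positivity), ih, pochR_succ]
    ring

lemma Real.mem_eball_zero_one_iff {x : ℝ} : x ∈ Metric.eball (0 : ℝ) 1 ↔ |x| < 1 := by
  rw [Metric.mem_eball, edist_zero_right, ← ofReal_norm, Real.norm_eq_abs, ENNReal.ofReal_lt_one]

lemma hasFPowerSeriesOnBall_one_sub_rpow_neg (a : ℝ) :
    HasFPowerSeriesOnBall (fun x : ℝ => (1 - x) ^ (-a))
      (.ofScalars ℝ fun n => pochR a n / n !) 0 1 := by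
  have h := Real.one_div_one_sub_rpow_hasFPowerSeriesOnBall_zero a
  simp only [← pochR_div_factorial_eq_choose] at h
  refine h.congr fun x hx => ?_
  have hx : |x| < 1 := Real.mem_eball_zero_one_iff.1 hx
  rw [Real.rpow_neg (by linarith [le_abs_self x]), ← one_div]

lemma hasSum_pochR_div_factorial_mul_pow (a : ℝ) {x : ℝ} (hx : |x| < 1) :
    HasSum (fun n => pochR a n / n ! * x ^ n) ((1 - x) ^ (-a)) := by
  simpa only [FormalMultilinearSeries.ofScalars_apply_eq, smul_eq_mul, zero_add] using
    (hasFPowerSeriesOnBall_one_sub_rpow_neg a).hasSum (Real.mem_eball_zero_one_iff.2 hx)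

lemma summable_norm_pochR_div_factorial_mul_pow (a : ℝ) {x : ℝ} (hx : |x| < 1) :
    Summable fun n => ‖pochR a n / n ! * x ^ n‖ := by
  have hr := (hasFPowerSeriesOnBall_one_sub_rpow_neg a).r_le
  simpa only [FormalMultilinearSeries.ofScalars_apply_eq, smul_eq_mul] using
    FormalMultilinearSeries.summable_norm_apply _
      (Metric.eball_subset_eball hr (Real.mem_eball_zero_one_iff.2 hx))

lemma hasSum_integral_mul_tsum_mul_pow {μ : Measure ℝ} {w : ℝ → ℝ} (hw : Integrable w μ)
    (ht : ∀ᵐ t ∂μ, |t| ≤ 1) {c : ℕ → ℝ} (hc : Summable fun n => ‖c n‖) :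
    HasSum (fun n => c n * ∫ t, w t * t ^ n ∂μ) (∫ t, w t * ∑' n, c n * t ^ n ∂μ) := by
  simp only [← integral_const_mul]
  refine hasSum_integral_of_dominated_convergence (fun n t => ‖c n‖ * ‖w t‖)
    (fun n => (hw.aestronglyMeasurable.mul (by fun_prop)).const_mul _) (fun n => ?_)
    (ae_of_all _ fun t => hc.mul_right _) ?_ ?_
  · filter_upwards [ht] with t ht
    rw [norm_mul, norm_mul, norm_pow, ← mul_assoc]
    exact mul_le_of_le_one_right (by positivity) (pow_le_one₀ (norm_nonneg t) ht)
  · simpa only [tsum_mul_right] using hw.norm.const_mul _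
  · filter_upwards [ht] with t ht
    have hct : Summable fun n => c n * t ^ n := hc.of_norm_bounded fun n => by
      rw [norm_mul, norm_pow]
      exact mul_le_of_le_one_right (norm_nonneg _) (pow_le_one₀ (norm_nonneg t) ht)
    simpa only [mul_left_comm (w t)] using hct.hasSum.mul_left (w t)

lemma Complex.ofReal_rpow_mul_one_sub_rpow {t : ℝ} (ht : t ∈ Icc (0 : ℝ) 1) (p q : ℝ) :
    ((t ^ (p - 1) * (1 - t) ^ (q - 1) : ℝ) : ℂ) =
      (t : ℂ) ^ ((p : ℂ) - 1) * (1 - (t : ℂ)) ^ ((q : ℂ) - 1) := by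
  push_cast [Complex.ofReal_cpow ht.1, Complex.ofReal_cpow (sub_nonneg.2 ht.2)]
  rfl

lemma integrableOn_rpow_mul_one_sub_rpow {p q : ℝ} (hp : 0 < p) (hq : 0 < q) :
    IntegrableOn (fun t : ℝ => t ^ (p - 1) * (1 - t) ^ (q - 1)) (Ioo 0 1) := by
  have h := Complex.betaIntegral_convergent (u := p) (v := q) (by simpa) (by simpa)
  rw [intervalIntegrable_iff_integrableOn_Ioc_of_le zero_le_one] at h
  refine (integrableOn_congr_fun (fun t ht => ?_) measurableSet_Ioo).1
    (h.mono_set Ioo_subset_Ioc_self).re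
  rw [← Complex.ofReal_rpow_mul_one_sub_rpow (Ioo_subset_Icc_self ht)]
  exact RCLike.ofReal_re _

lemma integral_rpow_mul_one_sub_rpow {p q : ℝ} (hp : 0 < p) (hq : 0 < q) :
    ∫ t in Ioo 0 1, t ^ (p - 1) * (1 - t) ^ (q - 1) =
      Real.Gamma p * Real.Gamma q / Real.Gamma (p + q) := by
  apply Complex.ofReal_injective
  rw [← integral_complex_ofReal, setIntegral_congr_fun measurableSet_Ioo
      fun t ht => Complex.ofReal_rpow_mul_one_sub_rpow (Ioo_subset_Icc_self ht) p q,
    ← integral_Ioc_eq_integral_Ioo, ← intervalIntegral.integral_of_le zero_le_one,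
    ← Complex.betaIntegral, Complex.betaIntegral_eq_Gamma_mul_div _ _ (by simpa) (by simpa),
    ← Complex.ofReal_add, Complex.Gamma_ofReal, Complex.Gamma_ofReal, Complex.Gamma_ofReal]
  norm_cast

lemma integral_rpow_mul_one_sub_rpow_mul_pow {p q : ℝ} (hp : 0 < p) (hq : 0 < q) (n : ℕ) :
    ∫ t in Ioo 0 1, t ^ (p - 1) * (1 - t) ^ (q - 1) * t ^ n =
      Real.Gamma p * Real.Gamma q / Real.Gamma (p + q) * (pochR p n / pochR (p + q) n) := by
  have hmoment : EqOn (fun t : ℝ => t ^ (p - 1) * (1 - t) ^ (q - 1) * t ^ n)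
      (fun t => t ^ (p + n - 1) * (1 - t) ^ (q - 1)) (Ioo 0 1) := fun t ht => by
    dsimp only
    rw [mul_right_comm, ← Real.rpow_natCast, ← Real.rpow_add ht.1, sub_add_eq_add_sub]
  rw [setIntegral_congr_fun measurableSet_Ioo hmoment,
    integral_rpow_mul_one_sub_rpow (by positivity) hq, add_right_comm,
    Real.Gamma_add_nat_eq_mul_pochR hp, Real.Gamma_add_nat_eq_mul_pochR (add_pos hp hq)]
  have hpoch := pochR_pos (add_pos hp hq) n
  have hΓ := Real.Gamma_pos_of_pos (add_pos hp hq)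
  field_simp

lemma abs_mul_lt_one {x y : ℝ} (hx : |x| < 1) (hy : |y| ≤ 1) : |x * y| < 1 := by
  rw [abs_mul]
  exact mul_lt_one_of_nonneg_of_lt_one_left (abs_nonneg x) hx hy

/-- Euler integral representation of the Gauss hypergeometric function: for
`γ > β > 0` and `|z| < 1`,
`₂F₁(α,β;γ;z) = Γ(γ)/(Γ(β)Γ(γ−β)) ∫₀¹ t^{β−1} (1−t)^{γ−β−1} (1−zt)^{−α} dt`,
the integral being a convergent Lebesgue integral. -/
theorem gauss_hypergeometric_euler_integral
    (α β γ z : ℝ) (hβ : 0 < β) (hβγ : β < γ) (hz : |z| < 1) :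
    MeasureTheory.IntegrableOn
      (fun t : ℝ => t ^ (β - 1) * (1 - t) ^ (γ - β - 1) * (1 - z * t) ^ (-α))
      (Set.Ioo (0 : ℝ) 1) ∧
    hyp2F1R α β γ z =
      Real.Gamma γ / (Real.Gamma β * Real.Gamma (γ - β)) *
        ∫ t in Set.Ioo (0 : ℝ) 1,
          t ^ (β - 1) * (1 - t) ^ (γ - β - 1) * (1 - z * t) ^ (-α) := by
  have hγ : 0 < γ := hβ.trans hβγ
  have hγβ : 0 < γ - β := sub_pos.2 hβγ
  have hw := integrableOn_rpow_mul_one_sub_rpow hβ hγβ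
  have hunit : ∀ t ∈ Icc (0 : ℝ) 1, |t| ≤ 1 := fun t ht => abs_le.2 ⟨by linarith [ht.1], ht.2⟩
  have hcont : ContinuousOn (fun t : ℝ => (1 - z * t) ^ (-α)) (Icc 0 1) :=
    ContinuousOn.rpow_const (by fun_prop) fun t ht =>
      Or.inl (by linarith [le_abs_self (z * t), abs_mul_lt_one hz (hunit t ht)])
  refine ⟨hw.mul_continuousOn_of_subset hcont measurableSet_Ioo isCompact_Icc
    Ioo_subset_Icc_self, ?_⟩
  have hbinom : ∀ t ∈ Ioo (0 : ℝ) 1, ∑' n, pochR α n / n ! * z ^ n * t ^ n = (1 - z * t) ^ (-α) :=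
    fun t ht => by
      simp only [mul_assoc, ← mul_pow]
      exact (hasSum_pochR_div_factorial_mul_pow α
        (abs_mul_lt_one hz (hunit t (Ioo_subset_Icc_self ht)))).tsum_eq
  have hseries := hasSum_integral_mul_tsum_mul_pow hw
    (ae_restrict_of_forall_mem measurableSet_Ioo fun t ht => hunit t (Ioo_subset_Icc_self ht))
    (summable_norm_pochR_div_factorial_mul_pow α hz)
  rw [setIntegral_congr_fun measurableSet_Ioo fun t ht => congrArg (_ * ·) (hbinom t ht)] at hseries
  rw [← (hseries.mul_left _).tsum_eq, hyp2F1R]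
  refine tsum_congr fun n => ?_
  rw [integral_rpow_mul_one_sub_rpow_mul_pow hβ hγβ, add_sub_cancel]
  have hpochγ := pochR_pos hγ n
  have hΓγ := Real.Gamma_pos_of_pos hγ
  have hΓβ := Real.Gamma_pos_of_pos hβ
  have hΓγβ := Real.Gamma_pos_of_pos hγβ
  field_simp
end

section
/- Let α, β₁, β₂, γ₁, γ₂ ∈ ℂ with γ₁ and γ₂ not non-positive integers. The holomorphic function F(x,y) = F₂(α; β₁, β₂; γ₁, γ₂ | x, y) satisfies on the domain {(x,y) ∈ ℂ² : |x| + |y| < 1} the second Appell F₂ partial differential equation: y(1−y) ∂²F/∂y² − x y ∂²F/∂x∂y + (γ₂ − (α+β₂+1)y) ∂F/∂y − β₂ x ∂F/∂x − α β₂ F = 0. -/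
/-!
The coefficients `a m n` of `F₂` are `(m + n).choose m` times three quotients of Pochhammer
symbols, each of which grows more slowly than any exponential. Hence `∑ ‖a m n‖ u ^ m v ^ n`
converges whenever `u + v < 1`, with room to spare for the polynomial factors produced by
differentiation, and `F₂` may be differentiated termwise on `‖x‖ + ‖y‖ < 1`.

With `θₓ = x ∂ₓ` and `θ_y = y ∂_y`, the operator of the equation is
`(θ_y + γ₂) ∂_y - (θₓ + θ_y + α) (θ_y + β₂)`. On coefficients of `x ^ m * y ^ n` it gives
`(n + 1) (n + γ₂) a m (n + 1) - (α + m + n) (β₂ + n) a m n`, which vanishes by the ratio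
of consecutive coefficients in `n`.
-/

/-- The Pochhammer symbol (rising factorial) `(a)_n = a (a+1) ⋯ (a+n-1)`. -/
noncomputable def pochC (a : ℂ) (n : ℕ) : ℂ := ∏ i ∈ Finset.range n, (a + i)

/-- The Appell hypergeometric function `F₂(α; β₁, β₂; γ₁, γ₂ | x, y)`, defined by its
double series for `|x| + |y| < 1`. -/
noncomputable def appellF2C (α β₁ β₂ γ₁ γ₂ x y : ℂ) : ℂ :=
  ∑' p : ℕ × ℕ,
    pochC α (p.1 + p.2) * pochC β₁ p.1 * pochC β₂ p.2 /
        (pochC γ₁ p.1 * pochC γ₂ p.2 * p.1.factorial * p.2.factorial) *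
      x ^ p.1 * y ^ p.2

/-- Partial derivative in the first variable. -/
noncomputable def dX (F : ℂ → ℂ → ℂ) (x y : ℂ) : ℂ := deriv (fun x' => F x' y) x

/-- Partial derivative in the second variable. -/
noncomputable def dY (F : ℂ → ℂ → ℂ) (x y : ℂ) : ℂ := deriv (fun y' => F x y') y

open Filter Topology

theorem hasSum_comp_add_iff {M E : Type*} [AddCommMonoid M] [PartialOrder M]
    [CanonicallyOrderedAdd M] [IsRightCancelAdd M] [AddCommMonoid E] [TopologicalSpace E]
    {f : M → E} {s : E} (k : M) (hf : ∀ p, ¬ k ≤ p → f p = 0) :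
    HasSum (fun q => f (q + k)) s ↔ HasSum f s := by
  refine (add_left_injective k).hasSum_iff fun p hp => hf p fun hkp => hp ?_
  obtain ⟨q, rfl⟩ := exists_add_of_le hkp
  exact ⟨q, add_comm q k⟩

theorem summable_comp_add_iff {M E : Type*} [AddCommMonoid M] [PartialOrder M]
    [CanonicallyOrderedAdd M] [IsRightCancelAdd M] [AddCommMonoid E] [TopologicalSpace E]
    {f : M → E} (k : M) (hf : ∀ p, ¬ k ≤ p → f p = 0) :
    Summable (fun q => f (q + k)) ↔ Summable f :=
  exists_congr fun _ => hasSum_comp_add_iff k hf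

theorem exists_natCast_add_one_mul_pow_le {t : ℝ} (h0 : 0 ≤ t) (h1 : t < 1) :
    ∃ C, ∀ m : ℕ, (m + 1) * t ^ m ≤ C := by
  obtain ⟨C, hC⟩ := (tendsto_self_mul_const_pow_of_lt_one h0 h1).bddAbove_range
  refine ⟨C + 1, fun m => ?_⟩
  have hm : (m : ℝ) * t ^ m ≤ C := hC ⟨m, rfl⟩
  have hpow : t ^ m ≤ 1 := pow_le_one₀ h0 h1.le
  linarith [add_mul (m : ℝ) 1 (t ^ m)]

theorem exists_norm_le_mul_pow_of_eventually_norm_succ_le {E : Type*} [SeminormedAddCommGroup E]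
    {f : ℕ → E} {ρ r : ℝ} (hr : 0 < r) (hρr : ρ < r)
    (h : ∀ᶠ n in atTop, ‖f (n + 1)‖ ≤ ρ * ‖f n‖) : ∃ D, 0 ≤ D ∧ ∀ n, ‖f n‖ ≤ D * r ^ n := by
  have hsum : Summable fun n => ‖f n‖ / r ^ n := by
    refine summable_of_ratio_norm_eventually_le ((div_lt_one hr).2 hρr) ?_
    filter_upwards [h] with n hn
    rw [Real.norm_of_nonneg (by positivity), Real.norm_of_nonneg (by positivity), pow_succ,
      ← div_div, div_le_iff₀ hr]
    calc ‖f (n + 1)‖ / r ^ n ≤ ρ * ‖f n‖ / r ^ n := by gcongr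
      _ = ρ / r * (‖f n‖ / r ^ n) * r := by field_simp
  obtain ⟨D, hD⟩ := hsum.tendsto_atTop_zero.bddAbove_range
  exact ⟨D, (by positivity : 0 ≤ ‖f 0‖ / r ^ 0).trans (hD ⟨0, rfl⟩),
    fun n => (div_le_iff₀ (by positivity)).1 (hD ⟨n, rfl⟩)⟩

theorem exists_one_lt_sq_mul_lt_one {s : ℝ} (hs : s < 1) : ∃ r : ℝ, 1 < r ∧ r ^ 2 * s < 1 := by
  have hlim : Tendsto (fun r : ℝ => r ^ 2 * s) (𝓝[>] 1) (𝓝 (1 ^ 2 * s)) :=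
    ((continuous_pow 2).mul continuous_const).continuousAt.tendsto.mono_left nhdsWithin_le_nhds
  rw [one_pow, one_mul] at hlim
  exact ((hlim.eventually (gt_mem_nhds hs)).and self_mem_nhdsWithin).exists.imp
    fun r hr => ⟨hr.2, hr.1⟩

theorem choose_mul_pow_mul_pow_le_add_pow {u v : ℝ} (hu : 0 ≤ u) (hv : 0 ≤ v) (m n : ℕ) :
    (m + n).choose m * u ^ m * v ^ n ≤ (u + v) ^ (m + n) := by
  rw [add_pow]
  refine (le_of_eq ?_).trans (Finset.single_le_sum
    (f := fun k => u ^ k * v ^ (m + n - k) * ((m + n).choose k : ℝ))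
    (fun k _ => by positivity) (Finset.mem_range.2 (by omega : m < m + n + 1)))
  rw [Nat.add_sub_cancel_left]
  ring

section DoubleSeries

variable {a : ℕ × ℕ → ℂ} {x y : ℂ}

noncomputable def doubleSeries (a : ℕ × ℕ → ℂ) (x y : ℂ) : ℂ :=
  ∑' p : ℕ × ℕ, a p * x ^ p.1 * y ^ p.2

def coeffDerivX (a : ℕ × ℕ → ℂ) (p : ℕ × ℕ) : ℂ := (p.1 + 1 : ℂ) * a (p.1 + 1, p.2)

def coeffDerivY (a : ℕ × ℕ → ℂ) (p : ℕ × ℕ) : ℂ := (p.2 + 1 : ℂ) * a (p.1, p.2 + 1)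

def SimplexSummable (a : ℕ × ℕ → ℂ) : Prop :=
  ∀ u v : ℝ, 0 ≤ u → 0 ≤ v → u + v < 1 → Summable fun p : ℕ × ℕ => ‖a p‖ * u ^ p.1 * v ^ p.2

namespace SimplexSummable

theorem hasSum (ha : SimplexSummable a) (h : ‖x‖ + ‖y‖ < 1) :
    HasSum (fun p : ℕ × ℕ => a p * x ^ p.1 * y ^ p.2) (doubleSeries a x y) := by
  refine (Summable.of_norm ?_).hasSum
  simpa only [norm_mul, norm_pow] using ha _ _ (norm_nonneg x) (norm_nonneg y) h

theorem coeffDerivX (ha : SimplexSummable a) : SimplexSummable (coeffDerivX a) := by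
  intro u v hu hv huv
  obtain ⟨w, huw, hwv⟩ := exists_between (show u < 1 - v by linarith)
  have hw : 0 < w := hu.trans_lt huw
  obtain ⟨C, hC⟩ := exists_natCast_add_one_mul_pow_le (div_nonneg hu hw.le)
    ((div_lt_one hw).2 huw)
  have hs := ((ha w v hw.le hv (by linarith)).comp_injective
    (add_left_injective ((1, 0) : ℕ × ℕ))).mul_left (C / w)
  refine hs.of_nonneg_of_le (fun p => by positivity) fun ⟨m, n⟩ => ?_
  have hpow : ((m : ℝ) + 1) * u ^ m ≤ C / w * w ^ (m + 1) := by
    have hCm := hC m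
    rw [div_pow, mul_div_assoc', div_le_iff₀ (by positivity)] at hCm
    rw [pow_succ, div_mul_eq_mul_div, mul_div_assoc, mul_div_cancel_right₀ _ hw.ne']
    linarith
  simp only [_root_.coeffDerivX, Function.comp_apply, Prod.mk_add_mk, add_zero, norm_mul]
  rw [show ‖((m : ℂ) + 1)‖ = (m : ℝ) + 1 by norm_cast]
  calc ((m : ℝ) + 1) * ‖a (m + 1, n)‖ * u ^ m * v ^ n
      = (((m : ℝ) + 1) * u ^ m) * (‖a (m + 1, n)‖ * v ^ n) := by ring
    _ ≤ (C / w * w ^ (m + 1)) * (‖a (m + 1, n)‖ * v ^ n) := by gcongr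
    _ = _ := by ring

theorem comp_swap (ha : SimplexSummable a) : SimplexSummable (a ∘ Prod.swap) := by
  intro u v hu hv huv
  refine ((Equiv.prodComm ℕ ℕ).summable_iff.2 (ha v u hv hu (by linarith))).congr fun p => ?_
  simp only [Function.comp_apply, Equiv.prodComm_apply, Prod.fst_swap, Prod.snd_swap]
  ring

theorem coeffDerivY (ha : SimplexSummable a) : SimplexSummable (coeffDerivY a) :=
  ha.comp_swap.coeffDerivX.comp_swap

end SimplexSummable

theorem doubleSeries_comp_swap (a : ℕ × ℕ → ℂ) (x y : ℂ) :
    doubleSeries (a ∘ Prod.swap) y x = doubleSeries a x y := by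
  rw [doubleSeries, doubleSeries, ← (Equiv.prodComm ℕ ℕ).tsum_eq]
  simp only [Function.comp_apply, Equiv.prodComm_apply, Prod.fst_swap, Prod.snd_swap,
    Prod.swap_swap]
  exact tsum_congr fun p => by ring

theorem hasSum_coeffDerivX_iff {s : ℂ} :
    HasSum (fun p : ℕ × ℕ => coeffDerivX a p * x ^ p.1 * y ^ p.2) s ↔
      HasSum (fun p : ℕ × ℕ => a p * ((p.1 : ℂ) * x ^ (p.1 - 1)) * y ^ p.2) s := by
  refine Iff.trans (Eq.to_iff (congrArg (HasSum · s) (funext fun ⟨m, n⟩ => ?_)))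
    (hasSum_comp_add_iff ((1, 0) : ℕ × ℕ) fun ⟨m, n⟩ hp => ?_)
  · simp only [coeffDerivX, Prod.mk_add_mk, add_zero, Nat.add_sub_cancel, Nat.cast_add,
      Nat.cast_one]
    ring
  · obtain rfl : m = 0 := by simpa [Prod.mk_le_mk] using hp
    simp

theorem hasDerivAt_doubleSeries_fst (ha : SimplexSummable a) (h : ‖x‖ + ‖y‖ < 1) :
    HasDerivAt (fun x' => doubleSeries a x' y) (doubleSeries (coeffDerivX a) x y) x := by
  obtain ⟨u, hxu, huy⟩ := exists_between (show ‖x‖ < 1 - ‖y‖ by linarith)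
  have hmaj : Summable fun p : ℕ × ℕ => ‖a p‖ * (p.1 * u ^ (p.1 - 1)) * ‖y‖ ^ p.2 := by
    refine (summable_comp_add_iff ((1, 0) : ℕ × ℕ) ?_).1 ?_
    · rintro ⟨m, n⟩ hp
      obtain rfl : m = 0 := by simpa [Prod.mk_le_mk] using hp
      simp
    refine (ha.coeffDerivX u ‖y‖ ((norm_nonneg x).trans hxu.le) (norm_nonneg y)
      (by linarith)).congr fun ⟨m, n⟩ => ?_
    simp only [coeffDerivX, Prod.mk_add_mk, add_zero, Nat.add_sub_cancel, Nat.cast_add,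
      Nat.cast_one, norm_mul]
    rw [show ‖((m : ℂ) + 1)‖ = (m : ℝ) + 1 by norm_cast]
    ring
  rw [← (hasSum_coeffDerivX_iff.1 (ha.coeffDerivX.hasSum h)).tsum_eq]
  refine hasDerivAt_tsum_of_isPreconnected hmaj Metric.isOpen_ball
    (convex_ball (0 : ℂ) u).isPreconnected
    (fun p x' _ => ((hasDerivAt_pow p.1 x').const_mul (a p)).mul_const (y ^ p.2))
    (fun p x' hx' => ?_) (mem_ball_zero_iff.2 hxu) (ha.hasSum h).summable
    (mem_ball_zero_iff.2 hxu)
  rw [mem_ball_zero_iff] at hx'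
  simp only [norm_mul, norm_pow, Complex.norm_natCast]
  gcongr

theorem coeffDerivY_eq_comp_swap (a : ℕ × ℕ → ℂ) :
    coeffDerivY a = coeffDerivX (a ∘ Prod.swap) ∘ Prod.swap := rfl

theorem hasDerivAt_doubleSeries_snd (ha : SimplexSummable a) (h : ‖x‖ + ‖y‖ < 1) :
    HasDerivAt (fun y' => doubleSeries a x y') (doubleSeries (coeffDerivY a) x y) y := by
  have := hasDerivAt_doubleSeries_fst ha.comp_swap (x := y) (y := x) (by linarith)
  rw [← doubleSeries_comp_swap (coeffDerivY a), coeffDerivY_eq_comp_swap, Function.comp_assoc,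
    Prod.swap_swap_eq, Function.comp_id]
  simpa only [doubleSeries_comp_swap] using this

theorem dX_doubleSeries (ha : SimplexSummable a) (h : ‖x‖ + ‖y‖ < 1) :
    dX (doubleSeries a) x y = doubleSeries (coeffDerivX a) x y :=
  (hasDerivAt_doubleSeries_fst ha h).deriv

theorem dY_doubleSeries (ha : SimplexSummable a) (h : ‖x‖ + ‖y‖ < 1) :
    dY (doubleSeries a) x y = doubleSeries (coeffDerivY a) x y :=
  (hasDerivAt_doubleSeries_snd ha h).deriv

theorem dY_congr {F G : ℂ → ℂ → ℂ} (hFG : ∀ x' y' : ℂ, ‖x'‖ + ‖y'‖ < 1 → F x' y' = G x' y')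
    (h : ‖x‖ + ‖y‖ < 1) : dY F x y = dY G x y := by
  refine Filter.EventuallyEq.deriv_eq ?_
  filter_upwards [(isOpen_lt (continuous_const.add continuous_norm) continuous_const).mem_nhds h]
    with y' hy' using hFG x y' hy'

theorem coeffDerivX_iterate (i : ℕ) (a : ℕ × ℕ → ℂ) (p : ℕ × ℕ) :
    coeffDerivX^[i] a p = ((p.1 + i).descFactorial i : ℂ) * a (p.1 + i, p.2) := by
  induction i generalizing a with
  | zero => simp
  | succ i ih =>
    rw [Function.iterate_succ_apply, ih, coeffDerivX, ← add_assoc, Nat.succ_descFactorial_succ]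
    push_cast
    ring

theorem coeffDerivY_iterate (j : ℕ) (a : ℕ × ℕ → ℂ) (p : ℕ × ℕ) :
    coeffDerivY^[j] a p = ((p.2 + j).descFactorial j : ℂ) * a (p.1, p.2 + j) := by
  induction j generalizing a with
  | zero => simp
  | succ j ih =>
    rw [Function.iterate_succ_apply, ih, coeffDerivY, ← add_assoc, Nat.succ_descFactorial_succ]
    push_cast
    ring

theorem SimplexSummable.iterate (ha : SimplexSummable a) (i j : ℕ) :
    SimplexSummable (_root_.coeffDerivY^[j] (_root_.coeffDerivX^[i] a)) := by
  induction j with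
  | zero =>
    induction i with
    | zero => exact ha
    | succ i ih => exact (Function.iterate_succ_apply' _ i a).symm ▸ ih.coeffDerivX
  | succ j ih => exact (Function.iterate_succ_apply' _ j _).symm ▸ ih.coeffDerivY

theorem hasSum_descFactorial_mul (ha : SimplexSummable a) (h : ‖x‖ + ‖y‖ < 1) (i j : ℕ) :
    HasSum (fun p : ℕ × ℕ => (p.1.descFactorial i * p.2.descFactorial j : ℂ) * a p *
        x ^ p.1 * y ^ p.2)
      (x ^ i * y ^ j * doubleSeries (coeffDerivY^[j] (coeffDerivX^[i] a)) x y) := by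
  refine (hasSum_comp_add_iff (i, j) ?_).1 ?_
  · rintro ⟨m, n⟩ hp
    rcases not_and_or.1 (Prod.mk_le_mk.not.1 hp) with hm | hn
    · simp [Nat.descFactorial_eq_zero_iff_lt.2 (not_le.1 hm)]
    · simp [Nat.descFactorial_eq_zero_iff_lt.2 (not_le.1 hn)]
  · refine (((ha.iterate i j).hasSum h).mul_left (x ^ i * y ^ j)).congr_fun fun ⟨m, n⟩ => ?_
    simp only [coeffDerivY_iterate, coeffDerivX_iterate, Prod.mk_add_mk, pow_add]
    ring

theorem secondAppellPDE_of_recurrence {α β₂ γ₂ : ℂ} (ha : SimplexSummable a)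
    (hrec : ∀ m n : ℕ,
      ((n : ℂ) + 1) * (γ₂ + n) * a (m, n + 1) = (α + m + n) * (β₂ + n) * a (m, n))
    (h : ‖x‖ + ‖y‖ < 1) :
    y * (1 - y) * dY (dY (doubleSeries a)) x y - x * y * dY (dX (doubleSeries a)) x y
      + (γ₂ - (α + β₂ + 1) * y) * dY (doubleSeries a) x y - β₂ * x * dX (doubleSeries a) x y
      - α * β₂ * doubleSeries a x y = 0 := by
  rw [dY_congr (fun _ _ h' => dY_doubleSeries ha h') h, dY_doubleSeries ha.coeffDerivY h,
    dY_congr (fun _ _ h' => dX_doubleSeries ha h') h, dY_doubleSeries ha.coeffDerivX h,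
    dY_doubleSeries ha h, dX_doubleSeries ha h]
  have h01 := hasSum_descFactorial_mul ha h 0 1
  have h10 := hasSum_descFactorial_mul ha h 1 0
  have h11 := hasSum_descFactorial_mul ha h 1 1
  have h02 := hasSum_descFactorial_mul ha h 0 2
  have hY01 := hasSum_descFactorial_mul ha.coeffDerivY h 0 1
  simp only [Function.iterate_succ_apply', Function.iterate_zero_apply, pow_zero, pow_one,
    one_mul, Nat.descFactorial_zero, Nat.descFactorial_one, Nat.cast_one, mul_one,
    Nat.cast_descFactorial_two] at h01 h10 h11 h02 hY01
  -- `hP` and `hQ` expand `(θ_y + γ₂) ∂_y F` and `(θₓ + θ_y + α) (θ_y + β₂) F` in monomials.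
  have hP := hY01.add ((ha.coeffDerivY.hasSum h).mul_left γ₂)
  have hQ := (((h02.add h11).add (h01.mul_left (α + β₂ + 1))).add (h10.mul_left β₂)).add
    ((ha.hasSum h).mul_left (α * β₂))
  have hPQ := hP.unique (hQ.congr_fun fun ⟨m, n⟩ => ?_)
  · linear_combination hPQ
  · simp only [coeffDerivY]
    linear_combination (x ^ m * y ^ n) * hrec m n

end DoubleSeries

theorem pochC_succ (a : ℂ) (n : ℕ) : pochC a (n + 1) = pochC a n * (a + n) :=
  Finset.prod_range_succ _ _

theorem pochC_one (n : ℕ) : pochC 1 n = n.factorial := by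
  induction n with
  | zero => simp [pochC]
  | succ n ih =>
    rw [pochC_succ, ih, Nat.factorial_succ]
    push_cast
    ring

theorem exists_norm_pochC_div_le (β γ : ℂ) {r : ℝ} (hr : 1 < r) :
    ∃ D, 0 ≤ D ∧ ∀ n, ‖pochC β n / pochC γ n‖ ≤ D * r ^ n := by
  have hlim : Tendsto (fun n : ℕ => ‖(β + 1 * n) / (γ + 1 * n)‖) atTop (𝓝 1) := by
    simpa using (tendsto_add_mul_div_add_mul_atTop_nhds β γ 1 one_ne_zero).norm
  refine exists_norm_le_mul_pow_of_eventually_norm_succ_le (ρ := (1 + r) / 2) (by linarith)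
    (by linarith) ?_
  filter_upwards [hlim.eventually (ge_mem_nhds (show (1 : ℝ) < (1 + r) / 2 by linarith))]
    with n hn
  rw [pochC_succ, pochC_succ, mul_div_mul_comm, norm_mul, mul_comm]
  simp only [one_mul] at hn
  gcongr

noncomputable def appellF2Coeff (α β₁ β₂ γ₁ γ₂ : ℂ) (p : ℕ × ℕ) : ℂ :=
  pochC α (p.1 + p.2) * pochC β₁ p.1 * pochC β₂ p.2 /
    (pochC γ₁ p.1 * pochC γ₂ p.2 * p.1.factorial * p.2.factorial)

theorem appellF2C_eq_doubleSeries (α β₁ β₂ γ₁ γ₂ : ℂ) :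
    appellF2C α β₁ β₂ γ₁ γ₂ = doubleSeries (appellF2Coeff α β₁ β₂ γ₁ γ₂) := rfl

theorem appellF2Coeff_eq (α β₁ β₂ γ₁ γ₂ : ℂ) (m n : ℕ) :
    appellF2Coeff α β₁ β₂ γ₁ γ₂ (m, n) = (m + n).choose m * (pochC α (m + n) / pochC 1 (m + n)) *
      (pochC β₁ m / pochC γ₁ m) * (pochC β₂ n / pochC γ₂ n) := by
  have hfac : ((m + n).factorial : ℂ) = (m + n).choose m * m.factorial * n.factorial := by
    exact_mod_cast (Nat.choose_mul_factorial_mul_factorial (Nat.le_add_right m n)).symm.trans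
      (by rw [Nat.add_sub_cancel_left])
  have hchoose : ((m + n).choose m : ℂ) ≠ 0 := by
    exact_mod_cast (Nat.choose_pos (Nat.le_add_right m n)).ne'
  rw [appellF2Coeff, pochC_one, hfac]
  simp only [div_eq_mul_inv, mul_inv]
  field_simp

theorem appellF2Coeff_succ_snd {α β₁ β₂ γ₁ γ₂ : ℂ} (hγ₂ : ∀ n : ℕ, γ₂ ≠ -(n : ℂ)) (m n : ℕ) :
    ((n : ℂ) + 1) * (γ₂ + n) * appellF2Coeff α β₁ β₂ γ₁ γ₂ (m, n + 1) =
      (α + m + n) * (β₂ + n) * appellF2Coeff α β₁ β₂ γ₁ γ₂ (m, n) := by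
  have hγn : γ₂ + n ≠ 0 := fun h => hγ₂ n (eq_neg_of_add_eq_zero_left h)
  have hn : (n : ℂ) + 1 ≠ 0 := Nat.cast_add_one_ne_zero n
  simp only [appellF2Coeff, ← add_assoc, pochC_succ, Nat.factorial_succ]
  push_cast
  simp only [div_eq_mul_inv, mul_inv]
  field_simp
  ring

theorem simplexSummable_appellF2Coeff (α β₁ β₂ γ₁ γ₂ : ℂ) :
    SimplexSummable (appellF2Coeff α β₁ β₂ γ₁ γ₂) := by
  intro u v hu hv huv
  obtain ⟨r, hr1, hr⟩ := exists_one_lt_sq_mul_lt_one huv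
  obtain ⟨D₀, hD₀, hα⟩ := exists_norm_pochC_div_le α 1 hr1
  obtain ⟨D₁, hD₁, hβ₁⟩ := exists_norm_pochC_div_le β₁ γ₁ hr1
  obtain ⟨D₂, hD₂, hβ₂⟩ := exists_norm_pochC_div_le β₂ γ₂ hr1
  set q := r ^ 2 * (u + v)
  have hq : Summable fun k : ℕ => q ^ k := summable_geometric_of_lt_one (by positivity) hr
  refine ((hq.mul_of_nonneg hq (fun _ => by positivity) fun _ => by positivity).mul_left
    (D₀ * D₁ * D₂)).of_nonneg_of_le (fun _ => by positivity) fun ⟨m, n⟩ => ?_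
  calc ‖appellF2Coeff α β₁ β₂ γ₁ γ₂ (m, n)‖ * u ^ m * v ^ n
      = (m + n).choose m * ‖pochC α (m + n) / pochC 1 (m + n)‖ *
          ‖pochC β₁ m / pochC γ₁ m‖ * ‖pochC β₂ n / pochC γ₂ n‖ * u ^ m * v ^ n := by
        rw [appellF2Coeff_eq]
        simp only [norm_mul, Complex.norm_natCast]
    _ ≤ (m + n).choose m * (D₀ * r ^ (m + n)) * (D₁ * r ^ m) * (D₂ * r ^ n) * u ^ m * v ^ n := by
        gcongr
        exacts [hα _, hβ₁ _, hβ₂ _]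
    _ = D₀ * D₁ * D₂ * (r ^ 2) ^ (m + n) * ((m + n).choose m * u ^ m * v ^ n) := by ring
    _ ≤ D₀ * D₁ * D₂ * (r ^ 2) ^ (m + n) * (u + v) ^ (m + n) := by
        gcongr
        exact choose_mul_pow_mul_pow_le_add_pow hu hv m n
    _ = D₀ * D₁ * D₂ * (q ^ m * q ^ n) := by rw [← pow_add, mul_assoc, ← mul_pow]

theorem appellF2_second_PDE_general
    (α β₁ β₂ γ₁ γ₂ : ℂ) (hγ₂ : ∀ n : ℕ, γ₂ ≠ -(n : ℂ)) :
    ∀ x y : ℂ, ‖x‖ + ‖y‖ < 1 →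
      y * (1 - y) * dY (dY (appellF2C α β₁ β₂ γ₁ γ₂)) x y
        - x * y * dY (dX (appellF2C α β₁ β₂ γ₁ γ₂)) x y
        + (γ₂ - (α + β₂ + 1) * y) * dY (appellF2C α β₁ β₂ γ₁ γ₂) x y
        - β₂ * x * dX (appellF2C α β₁ β₂ γ₁ γ₂) x y
        - α * β₂ * appellF2C α β₁ β₂ γ₁ γ₂ x y = 0 := by
  intro x y h
  rw [appellF2C_eq_doubleSeries]
  exact secondAppellPDE_of_recurrence (simplexSummable_appellF2Coeff α β₁ β₂ γ₁ γ₂)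
    (appellF2Coeff_succ_snd hγ₂) h

/-- For `γ₁, γ₂` not non-positive integers, the Appell `F₂` function satisfies the
second Appell `F₂` partial differential equation
`y(1−y) F_{yy} − x y F_{xy} + (γ₂ − (α+β₂+1)y) F_y − β₂ x F_x − α β₂ F = 0`
on the domain `{(x,y) : |x| + |y| < 1}`. -/
theorem appellF2_second_PDE
    (α β₁ β₂ γ₁ γ₂ : ℂ) (hγ₁ : ∀ n : ℕ, γ₁ ≠ -(n : ℂ)) (hγ₂ : ∀ n : ℕ, γ₂ ≠ -(n : ℂ)) :
    ∀ x y : ℂ, ‖x‖ + ‖y‖ < 1 →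
      y * (1 - y) * dY (dY (appellF2C α β₁ β₂ γ₁ γ₂)) x y
        - x * y * dY (dX (appellF2C α β₁ β₂ γ₁ γ₂)) x y
        + (γ₂ - (α + β₂ + 1) * y) * dY (appellF2C α β₁ β₂ γ₁ γ₂) x y
        - β₂ * x * dX (appellF2C α β₁ β₂ γ₁ γ₂) x y
        - α * β₂ * appellF2C α β₁ β₂ γ₁ γ₂ x y = 0 :=
  appellF2_second_PDE_general α β₁ β₂ γ₁ γ₂ hγ₂
end

section
/- For Λ₁, Λ₂ ∈ (0,1) define Π₀(Λ₁,Λ₂) = (4/π²)(Λ₁+Λ₂) K(Λ₁²) K(1−Λ₂²), Π₁(Λ₁,Λ₂) = (4i/π²)(Λ₁+Λ₂) K(1−Λ₁²) K(1−Λ₂²), Π₂(Λ₁,Λ₂) = (4i/π²)(Λ₁+Λ₂) K(Λ₁²) K(Λ₂²), Π₃(Λ₁,Λ₂) = −(4/π²)(Λ₁+Λ₂) K(1−Λ₁²) K(Λ₂²). If c₀, c₁, c₂, c₃ ∈ ℂ are such that c₀Π₀(Λ₁,Λ₂) + c₁Π₁(Λ₁,Λ₂) + c₂Π₂(Λ₁,Λ₂)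 + c₃Π₃(Λ₁,Λ₂) = 0 for all (Λ₁,Λ₂) in some nonempty open subset of (0,1)², then c₀ = c₁ = c₂ = c₃ = 0. In other words, the four period functions Π₀, Π₁, Π₂, Π₃ are linearly independent over ℂ. -/
/-- The Gauss hypergeometric function `₂F₁(a,b;c;z)`, defined by its series. -/
noncomputable def hyp2F1C (a b c z : ℂ) : ℂ :=
  ∑' n : ℕ, pochC a n * pochC b n / (pochC c n * n.factorial) * z ^ n

/-- The complete elliptic integral of the first kind `K(z) = (π/2)·₂F₁(1/2,1/2;1;z)`. -/
noncomputable def ellipticKC (z : ℂ) : ℂ :=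
  (Real.pi : ℂ) / 2 * hyp2F1C (1 / 2) (1 / 2) 1 z

/-- The four period functions `Π₀, Π₁, Π₂, Π₃` of the traintrack K3 family. -/
noncomputable def trainPeriod (j : Fin 4) (Λ₁ Λ₂ : ℝ) : ℂ :=
  match j with
  | 0 => 4 / (Real.pi : ℂ) ^ 2 * ((Λ₁ : ℂ) + (Λ₂ : ℂ)) *
      ellipticKC ((Λ₁ : ℂ) ^ 2) * ellipticKC (1 - (Λ₂ : ℂ) ^ 2)
  | 1 => 4 * Complex.I / (Real.pi : ℂ) ^ 2 * ((Λ₁ : ℂ) + (Λ₂ : ℂ)) *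
      ellipticKC (1 - (Λ₁ : ℂ) ^ 2) * ellipticKC (1 - (Λ₂ : ℂ) ^ 2)
  | 2 => 4 * Complex.I / (Real.pi : ℂ) ^ 2 * ((Λ₁ : ℂ) + (Λ₂ : ℂ)) *
      ellipticKC ((Λ₁ : ℂ) ^ 2) * ellipticKC ((Λ₂ : ℂ) ^ 2)
  | 3 => -(4 / (Real.pi : ℂ) ^ 2) * ((Λ₁ : ℂ) + (Λ₂ : ℂ)) *
      ellipticKC (1 - (Λ₁ : ℂ) ^ 2) * ellipticKC ((Λ₂ : ℂ) ^ 2)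

open Finset Complex Topology

section TwoByTwo

variable {K : Type*} [Field K]

theorem eq_zero_of_two_linear_eq_zero {x y a₁ b₁ a₂ b₂ : K} (hdet : a₁ * b₂ - a₂ * b₁ ≠ 0)
    (h₁ : x * a₁ + y * b₁ = 0) (h₂ : x * a₂ + y * b₂ = 0) : x = 0 ∧ y = 0 := by
  constructor
  · refine (mul_eq_zero.mp ?_).resolve_right hdet
    linear_combination b₂ * h₁ - b₁ * h₂
  · refine (mul_eq_zero.mp ?_).resolve_right hdet
    linear_combination a₁ * h₂ - a₂ * h₁

theorem eq_zero_of_bilinear_eq_zero {p q r t : K} {x y X Y : Fin 2 → K}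
    (hxy : x 0 * y 1 - x 1 * y 0 ≠ 0) (hXY : X 0 * Y 1 - X 1 * Y 0 ≠ 0)
    (h : ∀ i j, (p * x i + q * y i) * X j + (r * x i + t * y i) * Y j = 0) :
    p = 0 ∧ q = 0 ∧ r = 0 ∧ t = 0 := by
  have hrow : ∀ i, p * x i + q * y i = 0 ∧ r * x i + t * y i = 0 := fun i =>
    eq_zero_of_two_linear_eq_zero hXY (h i 0) (h i 1)
  obtain ⟨hp, hq⟩ := eq_zero_of_two_linear_eq_zero hxy (hrow 0).1 (hrow 1).1
  obtain ⟨hr, ht⟩ := eq_zero_of_two_linear_eq_zero hxy (hrow 0).2 (hrow 1).2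
  exact ⟨hp, hq, hr, ht⟩

end TwoByTwo

theorem IsOpen.exists_fin_two_prod_mem {α β : Type*} [TopologicalSpace α] [Preorder α]
    [TopologicalSpace β] [Preorder β] [∀ x : α, (𝓝[>] x).NeBot] [∀ y : β, (𝓝[>] y).NeBot]
    {s : Set (α × β)} (hs : IsOpen s) (hne : s.Nonempty) :
    ∃ u : Fin 2 → α, ∃ v : Fin 2 → β, u 0 < u 1 ∧ v 0 < v 1 ∧ ∀ i j, (u i, v j) ∈ s := by
  obtain ⟨⟨x, y⟩, hxy⟩ := hne
  obtain ⟨U, hU, V, hV, hUV⟩ := mem_nhds_prod_iff.mp (hs.mem_nhds hxy)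
  obtain ⟨x', hxx', hx'⟩ := Filter.Eventually.exists_gt hU
  obtain ⟨y', hyy', hy'⟩ := Filter.Eventually.exists_gt hV
  refine ⟨![x, x'], ![y, y'], hxx', hyy', fun i j => hUV ⟨?_, ?_⟩⟩
  · fin_cases i
    exacts [mem_of_mem_nhds hU, hx']
  · fin_cases j
    exacts [mem_of_mem_nhds hV, hy']

/-- The Taylor coefficients `((1/2)ₙ / n!)²` of `₂F₁(1/2,1/2;1;·)`. -/
noncomputable def ellipticKCoeff (n : ℕ) : ℝ := ∏ i ∈ range n, ((1 / 2 + i) / (1 + i)) ^ 2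

/-- `K` restricted to real arguments. -/
noncomputable def ellipticKReal (t : ℝ) : ℝ := Real.pi / 2 * ∑' n, ellipticKCoeff n * t ^ n

theorem ellipticKCoeff_pos (n : ℕ) : 0 < ellipticKCoeff n :=
  prod_pos fun i _ => by positivity

theorem ellipticKCoeff_le_one (n : ℕ) : ellipticKCoeff n ≤ 1 :=
  prod_le_one (fun i _ => by positivity) fun i _ =>
    pow_le_one₀ (by positivity) ((div_le_one (by positivity)).mpr (by linarith))

theorem summable_ellipticKCoeff_mul_pow {t : ℝ} (ht₀ : 0 ≤ t) (ht₁ : t < 1) :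
    Summable fun n => ellipticKCoeff n * t ^ n :=
  .of_nonneg_of_le (fun n => mul_nonneg (ellipticKCoeff_pos n).le (pow_nonneg ht₀ n))
    (fun n => mul_le_of_le_one_left (pow_nonneg ht₀ n) (ellipticKCoeff_le_one n))
    (summable_geometric_of_lt_one ht₀ ht₁)

theorem pochC_half_mul_div_eq_ellipticKCoeff (n : ℕ) :
    pochC (1 / 2) n * pochC (1 / 2) n / (pochC 1 n * n.factorial) = ellipticKCoeff n := by
  rw [← prod_range_add_one_eq_factorial, pochC, pochC, ellipticKCoeff]
  push_cast
  rw [← prod_mul_distrib, ← prod_mul_distrib, ← prod_div_distrib]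
  refine prod_congr rfl fun i _ => ?_
  have hi : (1 : ℂ) + i ≠ 0 := by norm_cast; omega
  field_simp
  ring

theorem ellipticKC_ofReal (t : ℝ) : ellipticKC t = ellipticKReal t := by
  simp only [ellipticKC, hyp2F1C, ellipticKReal, pochC_half_mul_div_eq_ellipticKCoeff]
  push_cast
  rfl

theorem ellipticKReal_pos {t : ℝ} (ht₀ : 0 ≤ t) (ht₁ : t < 1) : 0 < ellipticKReal t := by
  refine mul_pos (by positivity) ((summable_ellipticKCoeff_mul_pow ht₀ ht₁).tsum_pos
    (fun n => mul_nonneg (ellipticKCoeff_pos n).le (pow_nonneg ht₀ n)) 0 ?_)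
  simp [ellipticKCoeff]

theorem strictMonoOn_ellipticKReal : StrictMonoOn ellipticKReal (Set.Ico 0 1) := by
  rintro t ⟨ht₀, -⟩ u ⟨-, hu₁⟩ htu
  refine mul_lt_mul_of_pos_left ?_ (by positivity)
  refine Summable.tsum_lt_tsum_of_nonneg (i := 1)
    (fun n => mul_nonneg (ellipticKCoeff_pos n).le (pow_nonneg ht₀ n))
    (fun n => mul_le_mul_of_nonneg_left (pow_le_pow_left₀ ht₀ htu.le n) (ellipticKCoeff_pos n).le)
    ?_ (summable_ellipticKCoeff_mul_pow (ht₀.trans htu.le) hu₁)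
  simpa using mul_lt_mul_of_pos_left htu (ellipticKCoeff_pos 1)

theorem ellipticKReal_sq_mul_lt {u₁ u₂ : ℝ} (h₀ : 0 < u₁) (h₁₂ : u₁ < u₂) (h₁ : u₂ < 1) :
    ellipticKReal (u₁ ^ 2) * ellipticKReal (1 - u₂ ^ 2) <
      ellipticKReal (u₂ ^ 2) * ellipticKReal (1 - u₁ ^ 2) := by
  have hsq : u₁ ^ 2 < u₂ ^ 2 := pow_lt_pow_left₀ h₁₂ h₀.le two_ne_zero
  have hu₂ : u₂ ^ 2 < 1 := pow_lt_one₀ (h₀.trans h₁₂).le h₁ two_ne_zero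
  have hu₁ : 0 < u₁ ^ 2 := by positivity
  refine mul_lt_mul'' ?_ ?_ (ellipticKReal_pos hu₁.le (hsq.trans hu₂)).le
    (ellipticKReal_pos (by linarith) (by linarith)).le
  · exact strictMonoOn_ellipticKReal ⟨hu₁.le, hsq.trans hu₂⟩ ⟨hu₁.le.trans hsq.le, hu₂⟩ hsq
  · exact strictMonoOn_ellipticKReal ⟨by linarith, by linarith⟩ ⟨by linarith, by linarith⟩
      (by linarith)

theorem ellipticKC_sq_wronskian_ne_zero {u₁ u₂ : ℝ} (h₀ : 0 < u₁) (h₁₂ : u₁ < u₂) (h₁ : u₂ < 1) :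
    ellipticKC ((u₁ : ℂ) ^ 2) * ellipticKC (1 - (u₂ : ℂ) ^ 2) -
      ellipticKC ((u₂ : ℂ) ^ 2) * ellipticKC (1 - (u₁ : ℂ) ^ 2) ≠ 0 := by
  simp only [← ofReal_pow, ← ofReal_one, ← ofReal_sub, ellipticKC_ofReal, ← ofReal_mul,
    ofReal_ne_zero]
  exact (sub_neg.mpr (ellipticKReal_sq_mul_lt h₀ h₁₂ h₁)).ne

theorem trainPeriod_linear_combination (c₀ c₁ c₂ c₃ : ℂ) (Λ₁ Λ₂ : ℝ) :
    c₀ * trainPeriod 0 Λ₁ Λ₂ + c₁ * trainPeriod 1 Λ₁ Λ₂ + c₂ * trainPeriod 2 Λ₁ Λ₂ +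
        c₃ * trainPeriod 3 Λ₁ Λ₂ =
      4 / (Real.pi : ℂ) ^ 2 * ((Λ₁ : ℂ) + Λ₂) *
        ((I * c₂ * ellipticKC ((Λ₁ : ℂ) ^ 2) + -c₃ * ellipticKC (1 - (Λ₁ : ℂ) ^ 2)) *
            ellipticKC ((Λ₂ : ℂ) ^ 2) +
          (c₀ * ellipticKC ((Λ₁ : ℂ) ^ 2) + I * c₁ * ellipticKC (1 - (Λ₁ : ℂ) ^ 2)) *
            ellipticKC (1 - (Λ₂ : ℂ) ^ 2)) := by
  simp only [trainPeriod]
  ring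

theorem trainPeriod_prefactor_ne_zero {Λ₁ Λ₂ : ℝ} (h₁ : 0 < Λ₁) (h₂ : 0 < Λ₂) :
    4 / (Real.pi : ℂ) ^ 2 * ((Λ₁ : ℂ) + Λ₂) ≠ 0 := by
  have hπ : (Real.pi : ℂ) ≠ 0 := ofReal_ne_zero.mpr Real.pi_ne_zero
  have hΛ : (Λ₁ : ℂ) + Λ₂ ≠ 0 := by exact_mod_cast (add_pos h₁ h₂).ne'
  exact mul_ne_zero (div_ne_zero (by norm_num) (pow_ne_zero 2 hπ)) hΛ

/-- The four period functions `Π₀, Π₁, Π₂, Π₃` of the traintrack K3 family are linearly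
independent over `ℂ`: if a linear combination vanishes identically on a nonempty open
subset of `(0,1)²`, then all coefficients are zero. -/
theorem trainPeriods_linearly_independent
    (c₀ c₁ c₂ c₃ : ℂ) (s : Set (ℝ × ℝ)) (hs : IsOpen s) (hne : s.Nonempty)
    (hsub : s ⊆ Set.Ioo (0 : ℝ) 1 ×ˢ Set.Ioo (0 : ℝ) 1)
    (h : ∀ p ∈ s,
      c₀ * trainPeriod 0 p.1 p.2 + c₁ * trainPeriod 1 p.1 p.2 +
        c₂ * trainPeriod 2 p.1 p.2 + c₃ * trainPeriod 3 p.1 p.2 = 0) :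
    c₀ = 0 ∧ c₁ = 0 ∧ c₂ = 0 ∧ c₃ = 0 := by
  obtain ⟨u, v, hu, hv, huv⟩ := hs.exists_fin_two_prod_mem hne
  have hbox : ∀ i j, u i ∈ Set.Ioo (0 : ℝ) 1 ∧ v j ∈ Set.Ioo (0 : ℝ) 1 := fun i j =>
    hsub (huv i j)
  have hbilinear : ∀ i j,
      (I * c₂ * ellipticKC ((u i : ℂ) ^ 2) + -c₃ * ellipticKC (1 - (u i : ℂ) ^ 2)) *
          ellipticKC ((v j : ℂ) ^ 2) +
        (c₀ * ellipticKC ((u i : ℂ) ^ 2) + I * c₁ * ellipticKC (1 - (u i : ℂ) ^ 2)) *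
          ellipticKC (1 - (v j : ℂ) ^ 2) = 0 := fun i j => by
    have hij := h _ (huv i j)
    rw [trainPeriod_linear_combination] at hij
    exact (mul_eq_zero.mp hij).resolve_left
      (trainPeriod_prefactor_ne_zero (hbox i j).1.1 (hbox i j).2.1)
  obtain ⟨h₂, h₃, h₀, h₁⟩ := eq_zero_of_bilinear_eq_zero
    (ellipticKC_sq_wronskian_ne_zero (hbox 0 0).1.1 hu (hbox 1 0).1.2)
    (ellipticKC_sq_wronskian_ne_zero (hbox 0 0).2.1 hv (hbox 0 1).2.2) hbilinear
  exact ⟨h₀, (mul_eq_zero.mp h₁).resolve_left I_ne_zero,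
    (mul_eq_zero.mp h₂).resolve_left I_ne_zero, neg_eq_zero.mp h₃⟩
end
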